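/- arXiv:1606.04880 — 4 statements merged into one kernel-verified Lean document; each statement's English description precedes it below -/
import Mathlib

section
/- A mechanism (g,p) with outcome function g: T → [m] and payment vector p ∈ ℝ^m is incentive compatible (i.e., for all s,t ∈ T, t_{g(t)} - p_{g(t)} ≥ t_{g(s)} - p_{g(s)}) if and only if p is a min-plus tropical eigenvector of the allocation matrix L^g with eigenvalue 0, i.e., for every i ∈ [m], min_{j∈[m]} (L^g_{ij} + p_j) = p_i. -/
/-- A mechanism (g,p) is incentive compatible iff p is a min-plus
tropical eigenvector of the allocation matrix L^g with eigenvalue 0. -/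
theorem stmt0 (m : ℕ) (hm : 0 < m) (T : Set (Fin m → ℝ)) (hT : T.Nonempty)
    (g : (Fin m → ℝ) → Fin m) (hsurj : ∀ i : Fin m, ∃ t ∈ T, g t = i)
    (L : Fin m → Fin m → ℝ)
    (hL : ∀ i j : Fin m, IsGLB {x : ℝ | ∃ t ∈ T, g t = i ∧ x = t i - t j} (L i j))
    (p : Fin m → ℝ) :
    (∀ s ∈ T, ∀ t ∈ T, t (g t) - p (g t) ≥ t (g s) - p (g s)) ↔
      (∀ i : Fin m, IsGLB {x : ℝ | ∃ j : Fin m, x = L i j + p j} (p i)) := by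
  constructor
  · intro hIC i
    constructor
    · rintro x ⟨j, rfl⟩
      have hlb : (p i - p j) ∈ lowerBounds {x : ℝ | ∃ t ∈ T, g t = i ∧ x = t i - t j} := by
        rintro x ⟨t, ht, hgt, rfl⟩
        obtain ⟨s, hs, hgs⟩ := hsurj j
        have := hIC s hs t ht
        rw [hgt, hgs] at this
        linarith
      have := (hL i j).2 hlb
      linarith
    · intro b hb
      have hLii : L i i = 0 := by
        obtain ⟨s, hs, hgs⟩ := hsurj i
        have hmem : (0:ℝ) ∈ {x : ℝ | ∃ t ∈ T, g t = i ∧ x = t i - t i} :=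
          ⟨s, hs, hgs, by ring⟩
        have hle : L i i ≤ 0 := (hL i i).1 hmem
        have hge : (0:ℝ) ≤ L i i := (hL i i).2 (by rintro x ⟨t, ht, hgt, rfl⟩; simp)
        linarith
      have hmem2 : L i i + p i ∈ {x : ℝ | ∃ j, x = L i j + p j} := ⟨i, rfl⟩
      have := hb hmem2
      linarith
  · intro hGLB s hs t ht
    have h2 : L (g t) (g s) ≤ t (g t) - t (g s) :=
      (hL (g t) (g s)).1 ⟨t, ht, rfl, rfl⟩
    have h3 : p (g t) ≤ L (g t) (g s) + p (g s) := (hGLB (g t)).1 ⟨g s, rfl⟩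
    linarith
end

section
/- An outcome function g: T → [m] is weakly monotone (i.e., L^g_{jk} + L^g_{kj} ≥ 0 for all j,k) if and only if the open max-plus sectors L̄_1°, ..., L̄_m° determined by the rows of L^g are pairwise disjoint, where L̄_j° = {z ∈ ℝ^m : z_j - z_k > L^g_{jk} for all k ≠ j}. -/
/-- g is weakly monotone iff the open max-plus sectors of the
rows of L^g are pairwise disjoint. -/
theorem stmt9 (m : ℕ) (T : Set (Fin m → ℝ)) (g : (Fin m → ℝ) → Fin m)
    (hsurj : ∀ i : Fin m, ∃ t ∈ T, g t = i)
    (L : Fin m → Fin m → ℝ) (hdiag : ∀ j : Fin m, L j j = 0)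
    (hL : ∀ j k : Fin m, IsGLB {x : ℝ | ∃ t ∈ T, g t = j ∧ x = t j - t k} (L j k)) :
    (∀ j k : Fin m, 0 ≤ L j k + L k j) ↔
      (∀ j k : Fin m, j ≠ k →
        {z : Fin m → ℝ | ∀ l : Fin m, l ≠ j → z j - z l > L j l} ∩
          {z : Fin m → ℝ | ∀ l : Fin m, l ≠ k → z k - z l > L k l} = ∅) := by
  constructor
  · intro h j k hjk
    rw [Set.eq_empty_iff_forall_notMem]
    rintro z ⟨h1, h2⟩
    have e1 := h1 k hjk.symm
    have e2 := h2 j hjk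
    have e3 := h j k
    linarith
  · intro h j k
    by_cases hjk : j = k
    · subst hjk; simp [hdiag]
    by_contra hneg
    push_neg at hneg
    set a : ℝ := (L j k - L k j) / 2 with ha
    have haj : L j k < a := by rw [ha]; linarith
    have hak : a < -L k j := by rw [ha]; linarith
    set z : Fin m → ℝ :=
      fun l => if l = j then a else if l = k then 0 else min (a - L j l) (-L k l) - 1 with hz
    have hzj : z j = a := by simp [hz]
    have hzk : z k = 0 := by simp [hz, Ne.symm hjk]
    have hmem := h j k hjk
    rw [Set.eq_empty_iff_forall_notMem] at hmem
    apply hmem z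
    constructor
    · intro l hl
      by_cases hlk : l = k
      · subst hlk; rw [hzj, hzk]; linarith
      · have hzl : z l = min (a - L j l) (-L k l) - 1 := by simp [hz, hl, hlk]
        rw [hzj, hzl]
        have := min_le_left (a - L j l) (-L k l)
        linarith
    · intro l hl
      by_cases hlj : l = j
      · subst hlj; rw [hzj, hzk]; linarith
      · have hzl : z l = min (a - L j l) (-L k l) - 1 := by simp [hz, hlj, hl]
        rw [hzk, hzl]
        have := min_le_right (a - L j l) (-L k l)
        linarith
end

section
/- Let T ⊆ ℝ^m, let ν be a bipartite graph on [m] × T, and let σ = {y ∈ ℝ^m : y_i - t_i ≤ y_j - t_j for all (i,t) ∈ ν, j ∈ [m]}. Then σ is exactly the projection onto the y-coordinates of the set B = {(y, z) ∈ ℝ^m × ℝ^T : y_i + z_t ≥ t_i for all t ∈ T, i ∈ [m], with equality y_i + z_t = t_i whenever (i,t) ∈ ν}. -/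
/-- The cell σ of the covector ν is the projection onto the
y-coordinates of the lifted polyhedron B. -/
theorem stmt11 (m : ℕ) (hm : 0 < m) (T : Set (Fin m → ℝ))
    (ν : Set (Fin m × (Fin m → ℝ))) (hνT : ∀ e ∈ ν, e.2 ∈ T) :
    {y : Fin m → ℝ | ∀ e ∈ ν, ∀ j : Fin m, y e.1 - e.2 e.1 ≤ y j - e.2 j} =
      Prod.fst '' {yz : (Fin m → ℝ) × (T → ℝ) |
        (∀ t : T, ∀ i : Fin m, (t : Fin m → ℝ) i ≤ yz.1 i + yz.2 t) ∧
        (∀ e ∈ ν, ∀ ht : e.2 ∈ T, yz.1 e.1 + yz.2 ⟨e.2, ht⟩ = e.2 e.1)} := by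
  haveI : Nonempty (Fin m) := ⟨⟨0, hm⟩⟩
  ext y
  simp only [Set.mem_setOf_eq, Set.mem_image]
  constructor
  · intro hy
    refine ⟨(y, fun t => Finset.univ.sup' ⟨⟨0, hm⟩, Finset.mem_univ _⟩
        (fun k => (t : Fin m → ℝ) k - y k)), ⟨?_, ?_⟩, rfl⟩
    · intro t i
      have := Finset.le_sup' (fun k => (t : Fin m → ℝ) k - y k) (Finset.mem_univ i)
      linarith
    · intro e he ht
      have h1 : Finset.univ.sup' ⟨⟨0, hm⟩, Finset.mem_univ _⟩
          (fun k => e.2 k - y k) = e.2 e.1 - y e.1 := by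
        apply le_antisymm
        · apply Finset.sup'_le
          intro j _
          have := hy e he j
          linarith
        · exact Finset.le_sup' (fun k => e.2 k - y k) (Finset.mem_univ e.1)
      show y e.1 + Finset.univ.sup' ⟨⟨0, hm⟩, Finset.mem_univ _⟩
          (fun k => e.2 k - y k) = e.2 e.1
      rw [h1]; ring
  · rintro ⟨⟨y', z⟩, ⟨h1, h2⟩, rfl⟩
    intro e he j
    have he2 := h2 e he (hνT e he)
    have hj := h1 ⟨e.2, hνT e he⟩ j
    simp only at he2 hj ⊢
    linarith
end

section
/- Let L ∈ ℝ^{m×m} be a matrix with zero diagonal such that p ∈ ℝ^m satisfies p_i - p_j ≤ L_{ij} for all i,j. Define a directed graph G on [m] with edge (i,j) iff p_i - p_j = L_{ij}. If G is strongly connected, then every q ∈ ℝ^m with q_i - q_j ≤ L_{ij} for all i,j and q_i - q_j = L_{ij} for all edges (i,j) of G satisfies q = p + c·(1,...,1) for some c ∈ ℝ. -/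
/-- If the saturation graph of p is strongly connected, then any
q satisfying the inequalities and saturating the same edges equals p up to an
additive constant. -/
theorem stmt14 (m : ℕ) (hm : 0 < m) (L : Fin m → Fin m → ℝ)
    (hdiag : ∀ i : Fin m, L i i = 0)
    (p : Fin m → ℝ) (hp : ∀ i j : Fin m, p i - p j ≤ L i j)
    (hconn : ∀ i j : Fin m,
      Relation.ReflTransGen (fun a b : Fin m => p a - p b = L a b) i j) :
    ∀ q : Fin m → ℝ, (∀ i j : Fin m, q i - q j ≤ L i j) →
      (∀ i j : Fin m, p i - p j = L i j → q i - q j = L i j) →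
      ∃ c : ℝ, q = fun k => p k + c := by
  intro q hq hsat
  set i0 : Fin m := ⟨0, hm⟩
  refine ⟨q i0 - p i0, funext fun k => ?_⟩
  have h := hconn i0 k
  induction h with
  | refl => ring
  | tail _ hedge ih =>
    have := hsat _ _ hedge
    linarith [ih, hedge, this]
end
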